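/- Let 𝒦 be a class-locally λ-presentable category whose terminal object is λ-presentable, and let (ℒ, ℛ) be a cofibrantly class-λ-generated weak factorization system on 𝒦. Then Inj(ℒ), the full subcategory of objects K with (K → 1) ∈ ℛ, is a class-accessible category that is strongly accessibly embedded in 𝒦. -/

import Mathlib

/-!
Write `P` for the class of objects `X` with `X ⟶ 1` in `R`. Since `R = L^□` and `L = cof C`,
`P = Inj(L) = Inj(C)`, and as the domains of `C` are `κ`-presentable, `P` is closed under
`κ`-filtered colimits. Factoring `A ⟶ 1` through `L` and `R` turns every `κ`-presentable `A` into
a weak reflection `A ⟶ Z` into `P` with `Z` again `κ`-presentable.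

Now write `X ∈ P` as a `κ`-filtered colimit of `κ`-presentable objects `A_j`, and extend each
colimit injection along the weak reflection `A_j ⟶ Z_j` to `Z_j ⟶ X`. The full subcategory of
`K / X` on these `Z_j ⟶ X` is `κ`-filtered, since a `< κ`-small colimit of the `Z_j` is
`κ`-presentable and so its map to `X` factors through some `A_j ⟶ Z_j`, and `X` is its colimit.
Finally, a `κ`-presentable object of `P` is a retract of one of the `Z_j`, hence `κ`-presentable
in `K`.
-/

universe w₂ w₁ w v u u₁ u₂ u₃

open CategoryTheory CategoryTheory.Limits Opposite Order

namespace ClassAcc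

/-- A category `J` is `κ`-filtered provided that every diagram in `J` with fewer than `κ`
morphisms admits a cocone. -/
def IsCardinalFiltered (J : Type w) [Category.{w₁} J] (κ : Cardinal.{v}) : Prop :=
  ∀ (D : Type v) [SmallCategory D], Cardinal.mk (Σ (a : D) (b : D), a ⟶ b) < κ →
    ∀ (F : D ⥤ J), Nonempty (Cocone F)

/-- A category has `κ`-filtered colimits if it has colimits of all small `κ`-filtered shapes. -/
def HasCardinalFilteredColimits (κ : Cardinal.{v}) (K : Type u) [Category.{w} K] : Prop :=
  ∀ (J : Type v) [SmallCategory J], IsCardinalFiltered J κ → HasColimitsOfShape J K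

/-- An object `X` is `κ`-presentable if `Hom(X, -)` preserves `κ`-filtered colimits. -/
def IsPresentable (κ : Cardinal.{v}) {K : Type u} [Category.{w} K] (X : K) : Prop :=
  ∀ (J : Type v) [SmallCategory J], IsCardinalFiltered J κ →
    PreservesColimitsOfShape J (coyoneda.obj (op X))

/-- `X` is a `κ`-filtered colimit of `κ`-presentable objects. -/
def IsFilteredColimitOfPresentables (κ : Cardinal.{v}) {K : Type u} [Category.{w} K]
    (X : K) : Prop :=
  ∃ (J : Cat.{v, v}) (D : J ⥤ K) (c : Cocone D),
    IsCardinalFiltered (J : Type v) κ ∧ Nonempty (IsColimit c) ∧ c.pt = X ∧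
      ∀ j, IsPresentable κ (D.obj j)

/-- A category `K` is class-`κ`-accessible if it has `κ`-filtered colimits and every object
is a `κ`-filtered colimit of `κ`-presentable objects. -/
def ClassAccessible (κ : Cardinal.{v}) (K : Type u) [Category.{w} K] : Prop :=
  HasCardinalFilteredColimits κ K ∧ ∀ X : K, IsFilteredColimitOfPresentables κ X

/-- A class-`κ`-accessible category which is complete and cocomplete is
class-locally `κ`-presentable. -/
def ClassLocallyPresentable (κ : Cardinal.{v}) (K : Type u) [Category.{w} K] : Prop :=
  ClassAccessible κ K ∧ HasLimitsOfSize.{v, v} K ∧ HasColimitsOfSize.{v, v} K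

/-- A category is class-accessible if it is class-`κ`-accessible for some regular cardinal. -/
def IsClassAccessibleCat (K : Type u) [Category.{v} K] : Prop :=
  ∃ κ : Cardinal.{v}, κ.IsRegular ∧ ClassAccessible κ K

/-- A category is class-locally presentable if it is class-locally `κ`-presentable for some
regular cardinal `κ`. -/
def IsClassLocallyPresentableCat (K : Type u) [Category.{v} K] : Prop :=
  ∃ κ : Cardinal.{v}, κ.IsRegular ∧ ClassLocallyPresentable κ K

/-- A functor preserves `κ`-filtered colimits. -/
def PreservesCardinalFilteredColimits (κ : Cardinal.{v}) {K : Type u} [Category.{w} K]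
    {L : Type u₁} [Category.{w₁} L] (F : K ⥤ L) : Prop :=
  ∀ (J : Type v) [SmallCategory J], IsCardinalFiltered J κ → PreservesColimitsOfShape J F

/-- A class-`κ`-accessible functor between class-`κ`-accessible categories. -/
def ClassAccessibleFunctor (κ : Cardinal.{v}) {K : Type u} [Category.{w} K]
    {L : Type u₁} [Category.{w₁} L] (F : K ⥤ L) : Prop :=
  ClassAccessible κ K ∧ ClassAccessible κ L ∧ PreservesCardinalFilteredColimits κ F

/-- A strongly class-`κ`-accessible functor moreover preserves `κ`-presentable objects. -/
def StronglyClassAccessibleFunctor (κ : Cardinal.{v}) {K : Type u} [Category.{w} K]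
    {L : Type u₁} [Category.{w₁} L] (F : K ⥤ L) : Prop :=
  ClassAccessibleFunctor κ F ∧ ∀ X : K, IsPresentable κ X → IsPresentable κ (F.obj X)

/-- `F` is strongly class-accessible if it is strongly class-`κ`-accessible for some regular
cardinal `κ`. -/
def IsStronglyClassAccessibleFunctor {K : Type u} [Category.{v} K]
    {L : Type u₁} [Category.{v} L] (F : K ⥤ L) : Prop :=
  ∃ κ : Cardinal.{v}, κ.IsRegular ∧ StronglyClassAccessibleFunctor κ F

/-- A full subcategory (given by a predicate on objects) is closed under `κ`-filtered colimits. -/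
def ClosedUnderCardinalFilteredColimits (κ : Cardinal.{v}) {K : Type u} [Category.{w} K]
    (P : K → Prop) : Prop :=
  ∀ (J : Type v) [SmallCategory J], IsCardinalFiltered J κ →
    ∀ (D : J ⥤ K) (c : Cocone D), IsColimit c → (∀ j, P (D.obj j)) → P c.pt

/-- A full subcategory is strongly accessibly embedded if for some regular cardinal `κ` it is
closed under `κ`-filtered colimits and its inclusion preserves `κ`-presentable objects. -/
def StronglyAccessiblyEmbedded {K : Type u} [Category.{v} K] (P : K → Prop) : Prop :=
  ∃ κ : Cardinal.{v}, κ.IsRegular ∧ ClosedUnderCardinalFilteredColimits κ P ∧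
    ∀ X : ObjectProperty.FullSubcategory P, IsPresentable κ X → IsPresentable κ X.obj

end ClassAcc
namespace ClassAcc

/-- A class `C` of morphisms is cone-coreflective if for every morphism `f` there is a set
(indexed by a small type) of morphisms of `C` through which every morphism `g ⟶ f` of the
arrow category with `g ∈ C` factors. -/
def ConeCoreflective {K : Type u} [Category.{v} K] (C : MorphismProperty K) : Prop :=
  ∀ ⦃X Y : K⦄ (f : X ⟶ Y), ∃ (I : Type v) (S : I → Arrow K),
    (∀ i, C (S i).hom) ∧
    ∀ (g : Arrow K), C g.hom → ∀ (u : g ⟶ Arrow.mk f),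
      ∃ (i : I) (p : g ⟶ S i) (q : S i ⟶ Arrow.mk f), p ≫ q = u

/-- Stability under retracts in the arrow category. -/
def StableUnderRetracts {K : Type u} [Category.{v} K] (S : MorphismProperty K) : Prop :=
  ∀ ⦃X Y X' Y' : K⦄ (f : X ⟶ Y) (g : X' ⟶ Y'),
    (∃ (i : Arrow.mk f ⟶ Arrow.mk g) (r : Arrow.mk g ⟶ Arrow.mk f), i ≫ r = 𝟙 _) →
    S g → S f

/-- The restriction of a chain `F : γ ⥤ K` to the elements below `m`. -/
def restrictionBelow {γ : Type v} [Preorder γ] {K : Type u} [Category.{v} K]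
    (F : γ ⥤ K) (m : γ) : {i : γ // i < m} ⥤ K :=
  (Monotone.functor (f := fun i : {i : γ // i < m} => (i : γ)) fun _ _ h => h) ⋙ F

/-- The cocone over the restriction of `F` below `m` with apex `F.obj m`. -/
def coconeBelow {γ : Type v} [Preorder γ] {K : Type u} [Category.{v} K]
    (F : γ ⥤ K) (m : γ) : Cocone (restrictionBelow F m) where
  pt := F.obj m
  ι :=
    { app := fun i => F.map (homOfLE i.2.le)
      naturality := fun i j g => by
        dsimp [restrictionBelow]
        rw [Category.comp_id, ← F.map_comp]
        rfl }

/-- `S` is closed under transfinite compositions: for every well-ordered chain `F` whose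
successor steps lie in `S` and which is smooth (colimits at limit stages), the induced
morphism from the bottom object to the colimit of the chain lies in `S`. -/
def ClosedUnderTransfiniteComposition {K : Type u} [Category.{v} K]
    (S : MorphismProperty K) : Prop :=
  ∀ (γ : Type v) [LinearOrder γ] [OrderBot γ] [SuccOrder γ] [WellFoundedLT γ] (F : γ ⥤ K),
    (∀ i : γ, ¬IsMax i → S (F.map (homOfLE (le_succ i)))) →
    (∀ m : γ, IsSuccLimit m → Nonempty (IsColimit (coconeBelow F m))) →
    ∀ (c : Cocone F), IsColimit c → S (c.ι.app ⊥)

/-- `S` contains all isomorphisms, all pushouts of morphisms of `C`, and is closed under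
transfinite compositions and retracts. -/
def ClosedCofClass {K : Type u} [Category.{v} K] (C S : MorphismProperty K) : Prop :=
  (∀ ⦃X Y : K⦄ (f : X ⟶ Y), IsIso f → S f) ∧
  (∀ ⦃A B A' P : K⦄ (f : A ⟶ B) (t : A ⟶ A') (b : B ⟶ P) (g : A' ⟶ P),
      C f → IsPushout f t b g → S g) ∧
  ClosedUnderTransfiniteComposition S ∧
  StableUnderRetracts S

/-- `cof C` is the smallest class of morphisms containing the isomorphisms and closed under
transfinite compositions, pushouts of morphisms of `C`, and retracts. -/
def cof {K : Type u} [Category.{v} K] (C : MorphismProperty K) : MorphismProperty K :=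
  fun _ _ f => ∀ S : MorphismProperty K, ClosedCofClass C S → S f

/-- The class of morphisms with the right lifting property w.r.t. every morphism of `C`. -/
def rlp {K : Type u} [Category.{v} K] (C : MorphismProperty K) : MorphismProperty K :=
  fun _ _ g => ∀ ⦃A B : K⦄ (f : A ⟶ B), C f → HasLiftingProperty f g

/-- The class of morphisms with the left lifting property w.r.t. every morphism of `C`. -/
def llp {K : Type u} [Category.{v} K] (C : MorphismProperty K) : MorphismProperty K :=
  fun _ _ f => ∀ ⦃A B : K⦄ (g : A ⟶ B), C g → HasLiftingProperty f g

/-- `(L, R)` is a weak factorization system. -/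
def IsWeakFactorizationSystem {K : Type u} [Category.{v} K]
    (L R : MorphismProperty K) : Prop :=
  R = rlp L ∧ L = llp R ∧
    ∀ ⦃X Y : K⦄ (h : X ⟶ Y), ∃ (Z : K) (f : X ⟶ Z) (g : Z ⟶ Y), L f ∧ R g ∧ f ≫ g = h

/-- `f ⊥ g` : every commutative square from `f` to `g` has a unique diagonal filler. -/
def Orth {K : Type u} [Category.{v} K] {A B C D : K} (f : A ⟶ B) (g : C ⟶ D) : Prop :=
  ∀ (u : A ⟶ C) (v : B ⟶ D), u ≫ g = f ≫ v → ∃! d : B ⟶ C, f ≫ d = u ∧ d ≫ g = v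

/-- The class of morphisms orthogonal (on the right) to every morphism of `C`. -/
def perp {K : Type u} [Category.{v} K] (C : MorphismProperty K) : MorphismProperty K :=
  fun _ _ g => ∀ ⦃A B : K⦄ (f : A ⟶ B), C f → Orth f g

/-- The class of morphisms orthogonal (on the left) to every morphism of `C`. -/
def perpLeft {K : Type u} [Category.{v} K] (C : MorphismProperty K) : MorphismProperty K :=
  fun _ _ f => ∀ ⦃A B : K⦄ (g : A ⟶ B), C g → Orth f g

/-- `(L, R)` is an (orthogonal) factorization system. -/
def IsFactorizationSystem {K : Type u} [Category.{v} K]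
    (L R : MorphismProperty K) : Prop :=
  R = perp L ∧ L = perpLeft R ∧
    ∀ ⦃X Y : K⦄ (h : X ⟶ Y), ∃ (Z : K) (f : X ⟶ Z) (g : Z ⟶ Y), L f ∧ R g ∧ f ≫ g = h

/-- A class of morphisms of `K` is closed under colimits of a given small shape in the
arrow category. -/
def ClosedUnderColimitsInArrow {K : Type u} [Category.{v} K]
    (S : MorphismProperty K) : Prop :=
  ∀ (J : Type v) [SmallCategory J] (D : J ⥤ Arrow K) (c : Cocone D),
    IsColimit c → (∀ j, S (D.obj j).hom) → S c.pt.hom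

/-- `colimClosure C` is the smallest class of morphisms containing `C` and closed under all
(small) colimits in the arrow category. -/
def colimClosure {K : Type u} [Category.{v} K] (C : MorphismProperty K) :
    MorphismProperty K :=
  fun _ _ f => ∀ S : MorphismProperty K, C ≤ S → ClosedUnderColimitsInArrow S → S f

/-- `X` is injective with respect to every morphism of `C`. -/
def InjClass {K : Type u} [Category.{v} K] (C : MorphismProperty K) (X : K) : Prop :=
  ∀ ⦃A B : K⦄ (h : A ⟶ B), C h → ∀ u : A ⟶ X, ∃ v : B ⟶ X, h ≫ v = u

/-- `X` is orthogonal to every morphism of `C`. -/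
def OrtClass {K : Type u} [Category.{v} K] (C : MorphismProperty K) (X : K) : Prop :=
  ∀ ⦃A B : K⦄ (h : A ⟶ B), C h → ∀ u : A ⟶ X, ∃! v : B ⟶ X, h ≫ v = u

/-- A full subcategory `P` is weakly reflective if every object admits a weak reflection
into `P`. -/
def WeaklyReflective {K : Type u} [Category.{v} K] (P : K → Prop) : Prop :=
  ∀ X : K, ∃ (X' : K) (r : X ⟶ X'), P X' ∧
    ∀ (Y : K) (f : X ⟶ Y), P Y → ∃ g : X' ⟶ Y, r ≫ g = f

end ClassAcc
namespace ClassAcc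

/-- A weak factorization system `(L, R)` is cofibrantly class-`κ`-generated if `L = cof C`
for a cone-coreflective class `C` of `κ`-presentable morphisms such that every morphism
between `κ`-presentable objects has a weak factorization with `κ`-presentable middle
object. -/
def CofibrantlyClassGenerated (κ : Cardinal.{v}) {K : Type u} [Category.{v} K]
    (L R : MorphismProperty K) : Prop :=
  ∃ C : MorphismProperty K, ConeCoreflective C ∧ L = cof C ∧
    (∀ ⦃X Y : K⦄ (f : X ⟶ Y), C f → IsPresentable κ X ∧ IsPresentable κ Y) ∧
    (∀ ⦃X Y : K⦄ (f : X ⟶ Y), IsPresentable κ X → IsPresentable κ Y →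
      ∃ (Z : K) (l : X ⟶ Z) (r : Z ⟶ Y), L l ∧ R r ∧ l ≫ r = f ∧ IsPresentable κ Z)

end ClassAcc
namespace ClassAcc

section Presentability

variable {κ : Cardinal.{v}} [Fact κ.IsRegular]

lemma isCardinalFiltered_iff_isCardinalFiltered {J : Type w} [Category.{w₁} J] :
    IsCardinalFiltered J κ ↔ CategoryTheory.IsCardinalFiltered J κ := by
  have hsize (D : Type v) [SmallCategory D] :
      Cardinal.mk (Σ (a : D) (b : D), a ⟶ b) < κ ↔ HasCardinalLT (Arrow D) κ := by
    rw [hasCardinalLT_iff_cardinal_mk_lt, Cardinal.mk_congr (Arrow.equivSigma D)]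
  exact ⟨fun h => ⟨fun F hD => h _ ((hsize _).2 hD) F⟩,
    fun h D _ hD F => CategoryTheory.IsCardinalFiltered.nonempty_cocone F ((hsize D).1 hD)⟩

lemma isPresentable_iff_isCardinalPresentable {K : Type u} [Category.{w} K] {X : K} :
    IsPresentable κ X ↔ IsCardinalPresentable X κ := by
  refine ⟨fun h => ⟨fun J _ hJ => h J (isCardinalFiltered_iff_isCardinalFiltered.2 hJ)⟩,
    fun h J _ hJ => ?_⟩
  have := isCardinalFiltered_iff_isCardinalFiltered.1 hJ
  exact h.preservesColimitOfShape J

end Presentability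

section Lifting

variable {K : Type u} [Category.{v} K]

lemma closedCofClass_hasLiftingProperty (C : MorphismProperty K) {X Y : K} (p : X ⟶ Y)
    (hC : ∀ ⦃A B : K⦄ (f : A ⟶ B), C f → HasLiftingProperty f p) :
    ClosedCofClass C (fun _ _ f => HasLiftingProperty f p) := by
  refine ⟨fun _ _ f hf => inferInstance, fun _ _ _ _ f _ _ _ hf hpo => ?_, ?_, ?_⟩
  · have := hC f hf
    exact hpo.flip.hasLiftingProperty p
  · intro γ _ _ _ _ F hsucc hlim c hc
    -- `coconeBelow F m` is definitionally `(Set.principalSegIio m).cocone F`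
    have : F.IsWellOrderContinuous := ⟨hlim⟩
    exact HasLiftingProperty.transfiniteComposition.hasLiftingProperty_ι_app_bot hc hsucc
  · rintro _ _ _ _ f g ⟨i, r, hir⟩ hg
    exact RetractArrow.leftLiftingProperty ⟨i, r, hir⟩ p

lemma hasLiftingProperty_of_cof (C : MorphismProperty K) {A B : K} {f : A ⟶ B} (hf : cof C f)
    {X Y : K} (p : X ⟶ Y) (hC : ∀ ⦃A B : K⦄ (f : A ⟶ B), C f → HasLiftingProperty f p) :
    HasLiftingProperty f p :=
  hf _ (closedCofClass_hasLiftingProperty C p hC)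

lemma le_cof (C : MorphismProperty K) {A B : K} {f : A ⟶ B} (hf : C f) : cof C f :=
  fun _ hS => hS.2.1 f (𝟙 _) (𝟙 _) f hf IsPushout.of_id_snd

lemma closedUnderCardinalFilteredColimits_injClass
    {κ : Cardinal.{v}} [Fact κ.IsRegular] {C : MorphismProperty K}
    (hC : ∀ ⦃A B : K⦄ (f : A ⟶ B), C f → IsCardinalPresentable A κ) :
    ClosedUnderCardinalFilteredColimits κ (InjClass C) := by
  intro J _ hJ D c hc hD A B f hf u
  have := isCardinalFiltered_iff_isCardinalFiltered.1 hJ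
  have := hC f hf
  obtain ⟨j, u', rfl⟩ := IsCardinalPresentable.exists_hom_of_isColimit κ hc u
  obtain ⟨v, rfl⟩ := hD j f hf u'
  exact ⟨v ≫ c.ι.app j, by simp⟩

variable [HasTerminal K]

lemma hasLiftingProperty_terminal_from_iff {A B X : K} (f : A ⟶ B) :
    HasLiftingProperty f (terminal.from X) ↔ ∀ u : A ⟶ X, ∃ v : B ⟶ X, f ≫ v = u := by
  refine ⟨fun h u => ?_, fun h => ⟨fun {u w} sq => ?_⟩⟩
  · have sq : CommSq u f (terminal.from X) (terminal.from B) := ⟨Subsingleton.elim _ _⟩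
    exact ⟨sq.lift, sq.fac_left⟩
  · obtain ⟨v, hv⟩ := h u
    exact ⟨⟨{ l := v, fac_left := hv, fac_right := Subsingleton.elim _ _ }⟩⟩

lemma rlp_terminal_from_iff_injClass (C : MorphismProperty K) (X : K) :
    rlp C (terminal.from X) ↔ InjClass C X :=
  forall₄_congr fun _ _ f _ => hasLiftingProperty_terminal_from_iff f

lemma injClass_cof (C : MorphismProperty K) : InjClass (cof C) = InjClass C := by
  ext X
  simp only [← rlp_terminal_from_iff_injClass]
  exact ⟨fun h _ _ f hf => h f (le_cof C hf),
    fun h _ _ f hf => hasLiftingProperty_of_cof C hf _ h⟩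

end Lifting

section Approximation

variable {K : Type u} [Category.{v} K] {ι : Type v} {X : K} {Z : ι → K}

/-- The full subcategory of `Over X` on the objects `g i`, as a small category indexed by `ι`. -/
structure Approx (g : ∀ i, Z i ⟶ X) : Type v where
  idx : ι

instance (g : ∀ i, Z i ⟶ X) : SmallCategory (Approx g) where
  Hom a b := { h : Z a.idx ⟶ Z b.idx // h ≫ g b.idx = g a.idx }
  id _ := ⟨𝟙 _, Category.id_comp _⟩
  comp f h := ⟨f.1 ≫ h.1, by rw [Category.assoc, h.2, f.2]⟩

@[simp]
lemma Approx.comp_val (g : ∀ i, Z i ⟶ X) {a b d : Approx g} (f : a ⟶ b) (h : b ⟶ d) :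
    (f ≫ h).1 = f.1 ≫ h.1 :=
  rfl

abbrev Approx.diagram (g : ∀ i, Z i ⟶ X) : Approx g ⥤ K where
  obj a := Z a.idx
  map f := f.1

abbrev Approx.cocone (g : ∀ i, Z i ⟶ X) : Cocone (Approx.diagram g) where
  pt := X
  ι := { app a := g a.idx, naturality _ _ f := f.2.trans (Category.comp_id _).symm }

end Approximation

section ApproxColimit

variable {K : Type u} [Category.{v} K] (κ : Cardinal.{v}) [Fact κ.IsRegular]
  {J : Type v} [SmallCategory J] [CategoryTheory.IsCardinalFiltered J κ]
  {A : J ⥤ K} {c : Cocone A} {Z : J → K} {l : ∀ j, A.obj j ⟶ Z j} {g : ∀ j, Z j ⟶ c.pt}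

lemma Approx.exists_factor_through (hc : IsColimit c) (hg : ∀ j, l j ≫ g j = c.ι.app j)
    {W : K} [IsCardinalPresentable W κ] (f : W ⟶ c.pt) :
    ∃ (j : J) (h : W ⟶ Z j), h ≫ g j = f := by
  obtain ⟨j, f', rfl⟩ := IsCardinalPresentable.exists_hom_of_isColimit κ hc f
  exact ⟨j, f' ≫ l j, by simp [hg]⟩

variable [∀ j, IsCardinalPresentable (Z j) κ] [HasColimitsOfSize.{v, v} K]

lemma Approx.isCardinalFiltered (hc : IsColimit c) (hg : ∀ j, l j ≫ g j = c.ι.app j) :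
    CategoryTheory.IsCardinalFiltered (Approx g) κ := by
  refine ⟨fun {D} _ F hD => ?_⟩
  have (d : D) : IsCardinalPresentable ((F ⋙ diagram g).obj d) κ :=
    inferInstanceAs (IsCardinalPresentable (Z _) κ)
  have : IsCardinalPresentable (colimit (F ⋙ diagram g)) κ :=
    isCardinalPresentable_of_isColimit _ (colimit.isColimit _) κ hD
  obtain ⟨j, h, hh⟩ := exists_factor_through κ hc hg (colimit.desc _ ((cocone g).whisker F))
  refine ⟨⟨⟨j⟩, ⟨fun d => ⟨colimit.ι (F ⋙ diagram g) d ≫ h, by simp [hh]⟩,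
    fun d d' f => Subtype.ext ?_⟩⟩⟩
  simpa using colimit.w_assoc (F ⋙ diagram g) f h

lemma Approx.exists_coequalize (hc : IsColimit c) (hg : ∀ j, l j ≫ g j = c.ι.app j)
    {S : K} [IsCardinalPresentable S κ] {a : Approx g}
    (α β : S ⟶ Z a.idx) (h : α ≫ g a.idx = β ≫ g a.idx) :
    ∃ (b : Approx g) (w : a ⟶ b), α ≫ w.1 = β ≫ w.1 := by
  have (k : WalkingParallelPair) : IsCardinalPresentable ((parallelPair α β).obj k) κ := by
    cases k <;> dsimp <;> infer_instance
  have : IsCardinalPresentable (coequalizer α β) κ :=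
    isCardinalPresentable_of_isColimit _ (colimit.isColimit _) κ
      (hasCardinalLT_of_finite _ _ (Cardinal.IsRegular.aleph0_le Fact.out))
  obtain ⟨j, h', hh'⟩ := exists_factor_through κ hc hg (coequalizer.desc (g a.idx) h)
  exact ⟨⟨j⟩, ⟨coequalizer.π α β ≫ h', by simp [hh']⟩, coequalizer.condition_assoc α β h'⟩

lemma Approx.comp_ι_app_eq (hc : IsColimit c) (hg : ∀ j, l j ≫ g j = c.ι.app j)
    (s : Cocone (diagram g)) {S : K} [IsCardinalPresentable S κ]
    {a a' : Approx g} (p : S ⟶ Z a.idx) (q : S ⟶ Z a'.idx)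
    (h : p ≫ g a.idx = q ≫ g a'.idx) :
    p ≫ s.ι.app a = q ≫ s.ι.app a' := by
  have := isCardinalFiltered κ hc hg
  have := isFiltered_of_isCardinalFiltered (Approx g) κ
  let u := IsFiltered.leftToMax a a'
  let v := IsFiltered.rightToMax a a'
  obtain ⟨b, w, hw⟩ := exists_coequalize κ hc hg (p ≫ u.1) (q ≫ v.1)
    (by simpa [u.2, v.2] using h)
  rw [← s.w (u ≫ w), ← s.w (v ≫ w)]
  simpa using hw =≫ s.ι.app b

variable [∀ j, IsCardinalPresentable (A.obj j) κ]

def Approx.isColimit (hc : IsColimit c) (hg : ∀ j, l j ≫ g j = c.ι.app j) :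
    IsColimit (cocone g) where
  desc s := hc.desc
    { pt := s.pt
      ι :=
        { app j := l j ≫ s.ι.app ⟨j⟩
          naturality j j' f := by
            simpa using comp_ι_app_eq κ hc hg s (a := ⟨j'⟩) (a' := ⟨j⟩) (A.map f ≫ l j') (l j)
              (by simp [hg]) } }
  fac s a := by
    obtain ⟨j, f, hf⟩ := IsCardinalPresentable.exists_hom_of_isColimit κ hc (g a.idx)
    simp only [← hf, Category.assoc, hc.fac]
    simpa using comp_ι_app_eq κ hc hg s (a := ⟨j⟩) (f ≫ l j) (𝟙 _) (by simp [hg, hf])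
  uniq s m hm := hc.hom_ext fun j => by
    rw [hc.fac, ← hg j, Category.assoc]
    exact congrArg (l j ≫ ·) (hm ⟨j⟩)

end ApproxColimit

section FullSubcategory

variable {K : Type u} [Category.{v} K] {κ : Cardinal.{v}} [Fact κ.IsRegular] {P : K → Prop}

lemma ClosedUnderCardinalFilteredColimits.isClosedUnderColimitsOfShape
    (hP : ClosedUnderCardinalFilteredColimits κ P) (J : Type v) [SmallCategory J]
    [CategoryTheory.IsCardinalFiltered J κ] :
    ObjectProperty.IsClosedUnderColimitsOfShape P J :=
  ⟨fun _ ⟨p⟩ => hP J (isCardinalFiltered_iff_isCardinalFiltered.2 inferInstance) p.diag _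
    p.isColimit p.prop_diag_obj⟩

lemma ClosedUnderCardinalFilteredColimits.hasCardinalFilteredColimits
    (hP : ClosedUnderCardinalFilteredColimits κ P) (hK : HasCardinalFilteredColimits κ K) :
    HasCardinalFilteredColimits κ (ObjectProperty.FullSubcategory P) := by
  intro J _ hJ
  have := hK J hJ
  have := isCardinalFiltered_iff_isCardinalFiltered.1 hJ
  have := hP.isClosedUnderColimitsOfShape J
  infer_instance

lemma ClosedUnderCardinalFilteredColimits.isCardinalAccessible_ι
    (hP : ClosedUnderCardinalFilteredColimits κ P) (hK : HasCardinalFilteredColimits κ K) :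
    (ObjectProperty.ι P).IsCardinalAccessible κ := by
  refine ⟨fun J _ hJ => ?_⟩
  have := hK J (isCardinalFiltered_iff_isCardinalFiltered.2 hJ)
  have := hP.isClosedUnderColimitsOfShape J
  infer_instance

lemma ClosedUnderCardinalFilteredColimits.isCardinalPresentable_mk
    (hP : ClosedUnderCardinalFilteredColimits κ P) (hK : HasCardinalFilteredColimits κ K)
    {Z : K} (hZ : P Z) [IsCardinalPresentable Z κ] :
    IsCardinalPresentable (⟨Z, hZ⟩ : ObjectProperty.FullSubcategory P) κ := by
  have := hP.isCardinalAccessible_ι hK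
  exact Functor.isCardinalAccessible_of_natIso
    (F := ObjectProperty.ι P ⋙ coyoneda.obj (op Z)) (G := coyoneda.obj (op ⟨Z, hZ⟩))
    (NatIso.ofComponents
      (fun Y => ((ObjectProperty.fullyFaithfulι P).homEquiv (X := ⟨Z, hZ⟩) (Y := Y)).symm.toIso)
      fun _ => rfl) κ

def liftCocone {E : Type*} [Category* E] {D : E ⥤ K} (hD : ∀ e, P (D.obj e)) (c : Cocone D)
    (hc : P c.pt) : Cocone (ObjectProperty.lift P D hD) where
  pt := ⟨c.pt, hc⟩
  ι := { app e := ObjectProperty.homMk (c.ι.app e) }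

noncomputable def isColimitLiftCocone {E : Type*} [Category* E] {D : E ⥤ K}
    (hD : ∀ e, P (D.obj e)) {c : Cocone D} (hc : IsColimit c) (hP : P c.pt) :
    IsColimit (liftCocone hD c hP) :=
  isColimitOfReflects (ObjectProperty.ι P) hc

end FullSubcategory

section WeakReflections

variable {K : Type u} [Category.{v} K] {κ : Cardinal.{v}}

def HasPresentableWeakReflections (κ : Cardinal.{v}) (P : K → Prop) : Prop :=
  ∀ A : K, IsPresentable κ A → ∃ (Z : K) (r : A ⟶ Z), IsPresentable κ Z ∧ P Z ∧
    ∀ (X : K) (f : A ⟶ X), P X → ∃ h : Z ⟶ X, r ≫ h = f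

variable [Fact κ.IsRegular] {P : K → Prop}

lemma HasPresentableWeakReflections.exists_presentation
    (hP : HasPresentableWeakReflections κ P) (hK : ClassAccessible κ K)
    [HasColimitsOfSize.{v, v} K] {X : K} (hX : P X) :
    ∃ (E : Type v) (_ : SmallCategory E) (_ : CategoryTheory.IsCardinalFiltered E κ)
      (D : E ⥤ K) (c : Cocone D),
      Nonempty (IsColimit c) ∧ c.pt = X ∧
        ∀ e, P (D.obj e) ∧ IsCardinalPresentable (D.obj e) κ := by
  obtain ⟨J, A, c, hJ, ⟨hc⟩, rfl, hA⟩ := hK.2 X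
  choose Z l hZ hPZ hext using fun j => hP (A.obj j) (hA j)
  choose g hg using fun j => hext j c.pt (c.ι.app j) hX
  have := isCardinalFiltered_iff_isCardinalFiltered.1 hJ
  have (j : J) := isPresentable_iff_isCardinalPresentable.1 (hA j)
  have (j : J) := isPresentable_iff_isCardinalPresentable.1 (hZ j)
  exact ⟨Approx g, inferInstance, Approx.isCardinalFiltered κ hc hg, Approx.diagram g,
    Approx.cocone g, ⟨Approx.isColimit κ hc hg⟩, rfl, fun a => ⟨hPZ a.idx, this a.idx⟩⟩

theorem HasPresentableWeakReflections.classAccessible (hP : HasPresentableWeakReflections κ P)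
    (hK : ClassAccessible κ K) [HasColimitsOfSize.{v, v} K]
    (hclosed : ClosedUnderCardinalFilteredColimits κ P) :
    ClassAccessible κ (ObjectProperty.FullSubcategory P) ∧
      ∀ X : ObjectProperty.FullSubcategory P, IsPresentable κ X → IsPresentable κ X.obj := by
  refine ⟨⟨hclosed.hasCardinalFilteredColimits hK.1, fun ⟨X, hX⟩ => ?_⟩,
    fun ⟨X, hX⟩ hpres => ?_⟩
  all_goals
    obtain ⟨E, _, _, D, c, ⟨hc⟩, rfl, hD⟩ := hP.exists_presentation hK hX
    have hDP (e : E) : P (D.obj e) := (hD e).1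
  · refine ⟨Cat.of E, ObjectProperty.lift P D hDP, liftCocone hDP c hX,
      isCardinalFiltered_iff_isCardinalFiltered.2 ‹_›, ⟨isColimitLiftCocone hDP hc hX⟩, rfl,
      fun e => isPresentable_iff_isCardinalPresentable.2 ?_⟩
    have := (hD e).2
    exact hclosed.isCardinalPresentable_mk hK.1 (hDP e)
  · have := isPresentable_iff_isCardinalPresentable.1 hpres
    obtain ⟨e, s, hs⟩ := IsCardinalPresentable.exists_hom_of_isColimit κ
      (isColimitLiftCocone hDP hc hX) (𝟙 (⟨c.pt, hX⟩ : ObjectProperty.FullSubcategory P))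
    have := (hD e).2
    have : Retract c.pt (D.obj e) := ⟨s.hom, c.ι.app e, congrArg (·.hom) hs⟩
    exact isPresentable_iff_isCardinalPresentable.2 (this.isCardinalPresentable κ)

end WeakReflections

/-- **Corollary 4.10.** Let `K` be a class-locally `κ`-presentable category with a
`κ`-presentable terminal object and `(L, R)` a cofibrantly class-`κ`-generated weak
factorization system. Then `Inj(L) = {X | (X ⟶ 1) ∈ R}` is a class-accessible category
strongly accessibly embedded in `K`. -/
theorem injClass_of_wfs_classAccessible (κ : Cardinal.{v}) (hκ : κ.IsRegular)
    {K : Type u} [Category.{v} K] [Limits.HasTerminal K]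
    (hK : ClassLocallyPresentable κ K) (hterm : IsPresentable κ (⊤_ K))
    (L R : MorphismProperty K) (hwfs : IsWeakFactorizationSystem L R)
    (hgen : CofibrantlyClassGenerated κ L R) :
    IsClassAccessibleCat (ObjectProperty.FullSubcategory fun X : K => R (terminal.from X)) ∧
      StronglyAccessiblyEmbedded (fun X : K => R (terminal.from X)) := by
  have : Fact κ.IsRegular := ⟨hκ⟩
  have : HasColimitsOfSize.{v, v} K := hK.2.2
  obtain ⟨C, -, hLC, hCpres, hfact⟩ := hgen
  have hP : (fun X : K => R (terminal.from X)) = InjClass L := by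
    ext X
    rw [hwfs.1, rlp_terminal_from_iff_injClass]
  have hclosed : ClosedUnderCardinalFilteredColimits κ (InjClass L) := by
    rw [hLC, injClass_cof]
    exact closedUnderCardinalFilteredColimits_injClass fun _ _ f hf =>
      isPresentable_iff_isCardinalPresentable.1 (hCpres f hf).1
  have hrefl : HasPresentableWeakReflections κ (InjClass L) := fun A hA => by
    obtain ⟨Z, l, r, hl, hr, -, hZ⟩ := hfact (terminal.from A) hA hterm
    refine ⟨Z, l, hZ, ?_, fun X f hX => hX l hl f⟩
    rw [← hP]
    show R (terminal.from Z)
    rwa [terminal.hom_ext (terminal.from Z) r]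
  rw [hP]
  obtain ⟨hacc, hpres⟩ := hrefl.classAccessible hK.1 hclosed
  exact ⟨⟨κ, hκ, hacc⟩, ⟨κ, hκ, hclosed, hpres⟩⟩

end ClassAcc
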